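/- Let M be a Turing machine in Mathlib's TM0 model over a finite tape alphabet Γ and a finite state set Λ, started in its initial state on the all-blank tape (input ε), and let N = Fintype.card Λ * Fintype.card Γ. Then the head position is nonzero after some number of steps (i.e., the head ever leaves its starting cell) if and only if the head position is nonzero after some number of steps i with i ≤ N + 1. -/

import Mathlib

/-- One step of a TM0 machine, additionally tracking the net head displacement
(`+1` for a right-move, `-1` for a left-move). -/
def stepPos {Γ Λ : Type} [Inhabited Γ] [Inhabited Λ] (M : Turing.TM0.Machine Γ Λ)
    (p : Turing.TM0.Cfg Γ Λ × ℤ) : Option (Turing.TM0.Cfg Γ Λ × ℤ) :=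
  (Turing.TM0.step M p.1).map fun c' =>
    (c', p.2 +
      match M p.1.q p.1.Tape.head with
      | some (_, Turing.TM0.Stmt.move Turing.Dir.left) => -1
      | some (_, Turing.TM0.Stmt.move Turing.Dir.right) => 1
      | _ => 0)

/-- Run the machine for `n` steps from configuration `c`, tracking the head
position (net displacement from the starting cell); `none` means the machine
halted at some point within the first `n` steps. -/
def runPos {Γ Λ : Type} [Inhabited Γ] [Inhabited Λ] (M : Turing.TM0.Machine Γ Λ)
    (c : Turing.TM0.Cfg Γ Λ) : ℕ → Option (Turing.TM0.Cfg Γ Λ × ℤ)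
  | 0 => some (c, 0)
  | n + 1 => (runPos M c n).bind (stepPos M)

/-! While the head has not moved, the machine has only ever written on its start cell, so the
configuration is determined by the state and the symbol under the head: together with the halted
run there are at most `card Λ * card Γ + 1` such situations. If the runs of length
`0, …, card Λ * card Γ + 1` all end in one of them, two coincide, the run is periodic from there
on, and the head never moves. -/

open Turing Turing.TM0

theorem iterate_mem_of_forall_le_card {α : Type*} (f : α → α) (x : α) (s : Finset α)
    (h : ∀ i ≤ s.card, f^[i] x ∈ s) (n : ℕ) : f^[n] x ∈ s := by
  obtain ⟨a, ha, b, hb, hab, hfab⟩ := Finset.exists_ne_map_eq_of_card_lt_of_maps_to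
    (s := Finset.range (s.card + 1)) (t := s) (f := fun i => f^[i] x) (by simp)
    (fun i hi => h i (Finset.mem_range_succ_iff.mp hi))
  wlog hlt : a < b generalizing a b
  · exact this b hb a ha hab.symm hfab.symm (by omega)
  have hb : b ≤ s.card := Finset.mem_range_succ_iff.mp hb
  induction n using Nat.strong_induction_on with
  | _ n ih =>
    rcases le_or_gt n s.card with hn | hn
    · exact h n hn
    · obtain ⟨m, rfl⟩ := Nat.exists_eq_add_of_le (hb.trans hn.le)
      have hperiod : f^[b + m] x = f^[a + m] x := by
        rw [add_comm b, add_comm a, Function.iterate_add_apply, Function.iterate_add_apply]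
        exact congrArg _ hfab.symm
      rw [hperiod]
      exact ih _ (by omega)

section

variable {Γ Λ : Type} [Inhabited Γ]

theorem runPos_eq_iterate [Inhabited Λ] (M : Machine Γ Λ) (c : Cfg Γ Λ) (n : ℕ) :
    runPos M c n = (fun o => o.bind (stepPos M))^[n] (some (c, 0)) := by
  induction n with
  | zero => rfl
  | succ n ih => rw [Function.iterate_succ_apply', ← ih]; rfl

def HeadAway (o : Option (Cfg Γ Λ × ℤ)) : Prop :=
  ∃ p, o = some p ∧ p.2 ≠ 0

/-- The halted run, and the runs whose head is on its start cell with a blank tape around it. -/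
def parkedCfg : Option (Λ × Γ) → Option (Cfg Γ Λ × ℤ) :=
  Option.map fun qa => (⟨qa.1, ⟨qa.2, default, default⟩⟩, 0)

theorem not_headAway_parkedCfg (o : Option (Λ × Γ)) : ¬ HeadAway (parkedCfg o) := by
  rintro ⟨p, hp, hp0⟩
  cases o <;> cases hp
  exact hp0 rfl

theorem init_nil_eq_parkedCfg [Inhabited Λ] :
    some (init ([] : List Γ), (0 : ℤ)) = parkedCfg (some ((default : Λ), (default : Γ))) := by
  rfl

theorem bind_stepPos_parkedCfg [Inhabited Λ] (M : Machine Γ Λ) (o : Option (Λ × Γ))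
    (h : ¬ HeadAway ((parkedCfg o).bind (stepPos M))) :
    ∃ o', (parkedCfg o).bind (stepPos M) = parkedCfg o' := by
  rcases o with _ | ⟨q, a⟩
  · exact ⟨none, rfl⟩
  rcases hM : M q a with _ | ⟨q', d | b⟩
  · exact ⟨none, by simp [parkedCfg, stepPos, step, hM]⟩
  · refine absurd ?_ h
    cases d <;> simp [HeadAway, parkedCfg, stepPos, step, hM]
  · exact ⟨some (q', b), by simp [parkedCfg, stepPos, step, hM, Tape.write]⟩

theorem exists_runPos_eq_parkedCfg [Inhabited Λ] (M : Machine Γ Λ) {n : ℕ}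
    (h : ∀ i ≤ n, ¬ HeadAway (runPos M (init []) i)) :
    ∃ o, runPos M (init []) n = parkedCfg o := by
  induction n with
  | zero => exact ⟨_, init_nil_eq_parkedCfg⟩
  | succ n ih =>
    obtain ⟨o, ho⟩ := ih fun i hi => h i (by omega)
    have hstep : runPos M (init []) (n + 1) = (parkedCfg o).bind (stepPos M) := by
      rw [← ho]; rfl
    rw [hstep]
    exact bind_stepPos_parkedCfg M o (hstep ▸ h (n + 1) le_rfl)

end

/-- On the blank input, the head ever leaves its starting cell iff it does so
within the first `card Λ * card Γ + 1` steps. -/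
theorem head_leaves_iff_leaves_early {Γ Λ : Type} [Inhabited Γ] [Inhabited Λ]
    [Fintype Γ] [Fintype Λ] (M : Turing.TM0.Machine Γ Λ) :
    (∃ (i : ℕ) (p : Turing.TM0.Cfg Γ Λ × ℤ),
        runPos M (Turing.TM0.init ([] : List Γ)) i = some p ∧ p.2 ≠ 0) ↔
    (∃ i ≤ Fintype.card Λ * Fintype.card Γ + 1,
        ∃ p : Turing.TM0.Cfg Γ Λ × ℤ,
          runPos M (Turing.TM0.init ([] : List Γ)) i = some p ∧ p.2 ≠ 0) := by
  change (∃ n, HeadAway (runPos M (init []) n)) ↔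
    ∃ i ≤ Fintype.card Λ * Fintype.card Γ + 1, HeadAway (runPos M (init []) i)
  refine ⟨fun ⟨n, hn⟩ => ?_, fun ⟨i, _, hi⟩ => ⟨i, hi⟩⟩
  by_contra! hstay
  classical
  let s := Finset.univ.image (parkedCfg (Γ := Γ) (Λ := Λ))
  have hcard : s.card ≤ Fintype.card Λ * Fintype.card Γ + 1 := by
    simpa using Finset.card_image_le (s := Finset.univ) (f := parkedCfg (Γ := Γ) (Λ := Λ))
  have hs : ∀ i ≤ s.card, (fun o => o.bind (stepPos M))^[i] (some (init [], 0)) ∈ s := by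
    intro i hi
    obtain ⟨o, ho⟩ := exists_runPos_eq_parkedCfg M (n := i) fun j hj => hstay j (by omega)
    rw [← runPos_eq_iterate, ho]
    exact Finset.mem_image_of_mem _ (Finset.mem_univ o)
  obtain ⟨o, -, ho⟩ := Finset.mem_image.mp (iterate_mem_of_forall_le_card _ _ s hs n)
  rw [← runPos_eq_iterate] at ho
  exact not_headAway_parkedCfg o (ho ▸ hn)
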